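/- Fix n, T with T ≥ n, and real data sequences U = (ū_0,…,ū_T), Y = (ȳ_0,…,ȳ_T). Let H ∈ ℝ^{(2n+1)×(T−n+1)} be the stacked Hankel matrix [H_n(U); H̄_n(Y)] (where H̄_n(Y) has n rows), and let b = (ȳ_n,…,ȳ_T) ∈ ℝ^{1×(T−n+1)}. Then the set Σ_{U,Y} = { v ∈ ℝ^{1×(2n+1)} : v H' = b }, where H' = [H_n(U); H̄_n(Y)], is a singleton if and only if rank [H_n(U); H̄_n(Y)] = rank [H_n(U); H_n(Y)] = 2n+1. -/

import Mathlib

/-!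
Write `H` for `[H_n(U); H̄_n(Y)]` and `b = (ȳ_n, …, ȳ_T)`. The rows of `[H_n(U); H_n(Y)]` are
those of `H` together with `b`, which is the last row of `H_n(Y)`. The system `v H = b` has a
unique solution iff the rows of `H` are linearly independent, i.e. `rank H = 2n + 1`, and `b` lies
in their span, i.e. appending `b` does not raise the rank.
-/

open Matrix Submodule Module

theorem AddMonoidHom.existsUnique_eq_iff {G H : Type*} [AddGroup G] [AddGroup H] (f : G →+ H)
    (b : H) : (∃! x, f x = b) ↔ Function.Injective f ∧ b ∈ Set.range f := by
  constructor
  · rintro ⟨x, hx, huniq⟩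
    refine ⟨(injective_iff_map_eq_zero f).2 fun y hy => ?_, x, hx⟩
    simpa using huniq (x + y) (show f (x + y) = b by rw [map_add, hx, hy, add_zero])
  · rintro ⟨hf, hb⟩
    exact hf.existsUnique_of_mem_range hb

theorem Submodule.mem_span_iff_finrank_span_insert_eq {K V : Type*} [DivisionRing K]
    [AddCommGroup V] [Module K V] {s : Set V} (hs : s.Finite) (x : V) :
    x ∈ span K s ↔ finrank K (span K (insert x s)) = finrank K (span K s) := by
  have : FiniteDimensional K (span K (insert x s)) :=
    FiniteDimensional.span_of_finite K (hs.insert x)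
  refine ⟨fun h => by rw [span_insert_eq_span h], fun h => ?_⟩
  rw [eq_of_le_of_finrank_eq (span_mono (Set.subset_insert x s)) h.symm]
  exact subset_span (Set.mem_insert x s)

theorem Fin.range_eq_insert_last {α : Type*} {k : ℕ} (f : Fin (k + 1) → α) :
    Set.range f = insert (f (Fin.last k)) (Set.range fun i : Fin k => f i.castSucc) := by
  conv_lhs => rw [← Fin.snoc_init_self f]
  exact Fin.range_snoc _ _

namespace Matrix

variable {m m' κ K α : Type*}

theorem range_row_fromRows_eq_insert_last {k : ℕ} (P : Matrix m κ α)
    (Q : Matrix (Fin (k + 1)) κ α) :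
    Set.range (fromRows P Q).row =
      insert (Q (Fin.last k)) (Set.range (fromRows P fun i : Fin k => Q i.castSucc).row) := by
  calc Set.range (fromRows P Q).row
      = Set.range P ∪ Set.range Q := Set.Sum.elim_range (γ := κ → α) P Q
    _ = insert (Q (Fin.last k)) (Set.range P ∪ Set.range fun i : Fin k => Q i.castSucc) := by
      rw [Fin.range_eq_insert_last (Q : Fin (k + 1) → κ → α), Set.union_insert]
    _ = _ := congrArg _ (Set.Sum.elim_range (γ := κ → α) P _).symm

variable [Fintype m] [Fintype m'] [Field K]

theorem exists_vecMul_eq_iff_mem_span_row (A : Matrix m κ K) (b : κ → K) :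
    (∃ v, v ᵥ* A = b) ↔ b ∈ span K (Set.range A.row) := by
  rw [← range_vecMulLinear, LinearMap.mem_range]
  rfl

variable [Fintype κ]

theorem rank_eq_card_iff_injective_vecMul (A : Matrix m κ K) :
    A.rank = Fintype.card m ↔ Function.Injective A.vecMul := by
  rw [vecMul_injective_iff, linearIndependent_iff_card_eq_finrank_span,
    rank_eq_finrank_span_row, Set.finrank, eq_comm]

theorem existsUnique_vecMul_eq_iff_rank_eq (A : Matrix m κ K) (B : Matrix m' κ K) (b : κ → K)
    (hB : Set.range B.row = insert b (Set.range A.row)) :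
    (∃! v, v ᵥ* A = b) ↔ A.rank = Fintype.card m ∧ B.rank = Fintype.card m := by
  have hmem : b ∈ span K (Set.range A.row) ↔ B.rank = A.rank := by
    rw [rank_eq_finrank_span_row, rank_eq_finrank_span_row, hB]
    exact mem_span_iff_finrank_span_insert_eq (Set.finite_range _) b
  refine (A.vecMulLinear.toAddMonoidHom.existsUnique_eq_iff b).trans ?_
  change Function.Injective A.vecMul ∧ b ∈ Set.range A.vecMul ↔ _
  rw [← rank_eq_card_iff_injective_vecMul, Set.mem_range, exists_vecMul_eq_iff_mem_span_row, hmem]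
  exact and_congr_right fun h => by rw [h]

end Matrix

theorem stmt_4 (n T : ℕ) (hT : n ≤ T) (U Y : Fin (T + 1) → ℝ) :
    (∃! v : Fin (n + 1) ⊕ Fin n → ℝ,
        v ᵥ* Matrix.fromRows
            (Matrix.of fun (i : Fin (n + 1)) (j : Fin (T - n + 1)) =>
              U ⟨i.1 + j.1, by omega⟩)
            (Matrix.of fun (i : Fin n) (j : Fin (T - n + 1)) =>
              Y ⟨i.1 + j.1, by omega⟩)
          = fun j : Fin (T - n + 1) => Y ⟨n + j.1, by omega⟩) ↔
      ((Matrix.fromRows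
            (Matrix.of fun (i : Fin (n + 1)) (j : Fin (T - n + 1)) =>
              U ⟨i.1 + j.1, by omega⟩)
            (Matrix.of fun (i : Fin n) (j : Fin (T - n + 1)) =>
              Y ⟨i.1 + j.1, by omega⟩)).rank = 2 * n + 1 ∧
        (Matrix.fromRows
            (Matrix.of fun (i : Fin (n + 1)) (j : Fin (T - n + 1)) =>
              U ⟨i.1 + j.1, by omega⟩)
            (Matrix.of fun (i : Fin (n + 1)) (j : Fin (T - n + 1)) =>
              Y ⟨i.1 + j.1, by omega⟩)).rank = 2 * n + 1) := by
  have hcard : Fintype.card (Fin (n + 1) ⊕ Fin n) = 2 * n + 1 := by simp; omega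
  rw [← hcard]
  exact existsUnique_vecMul_eq_iff_rank_eq _ _ _ (range_row_fromRows_eq_insert_last _ _)
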